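/- For every integer k ≥ 1, the minimum of the dominator chromatic number χ_d(D) over all orientations D of the path P_{4k+1} equals k+2. -/

import Mathlib

/-!
Fix an orientation of `P_{4k+1}` and a dominator coloring with `t` colors. Every arc has its tail
among the non-sinks, each of out-degree at most two, so there are at least `2k` non-sinks. A color
class is dominated by at most two vertices (in-neighbours of any of its members), so at least `k`
colors are dominated, and each dominated class has at most two vertices (out-neighbours of its
dominator). If all colors are dominated, `4k + 1 ≤ 2t`. Otherwise `t ≥ k + 1`, and `t = k + 1`
forces equality in every count: each non-sink has out-degree two and no in-neighbour, so it
carries the one undominated color; since at most `2k` vertices have a dominated color, some sink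
carries it as well, and so does the non-sink pointing to that sink, a contradiction.

The bound is attained by the orientation whose sources are the odd vertices: color all odd
vertices alike, give each vertex `≡ 2 (mod 4)` its own color and the vertices `≡ 0 (mod 4)` one
more.
-/

/-- A vertex `v` dominates the color class of color `a` under coloring `c`:
the class is nonempty and every vertex of that color is an out-neighbor of `v`. -/
def Dominates {V α : Type*} (A : V → V → Prop) (c : V → α) (v : V) (a : α) : Prop :=
  (∃ w, c w = a) ∧ ∀ w, c w = a → A v w

/-- A dominator coloring of the digraph with arc relation `A`: a proper coloring
such that every vertex with positive out-degree dominates some color class. -/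
def IsDominatorColoring {V α : Type*} (A : V → V → Prop) (c : V → α) : Prop :=
  (∀ u v, A u v → c u ≠ c v) ∧ ∀ v, (∃ w, A v w) → ∃ a, Dominates A c v a

/-- The dominator chromatic number: the least `k` admitting a dominator coloring
with colors in `Fin k`. -/
noncomputable def domChrom {V : Type*} (A : V → V → Prop) : ℕ :=
  sInf {k | ∃ c : V → Fin k, IsDominatorColoring A c}

/-- The arc relation of the orientation of the path `P_n` (vertices `0,…,n-1`)
determined by `o`: the edge between `i` and `i+1` is directed `i → i+1`
when `o i = true` and `i+1 → i` when `o i = false`. -/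
def pathArc (n : ℕ) (o : ℕ → Bool) (u v : Fin n) : Prop :=
  ((u : ℕ) + 1 = (v : ℕ) ∧ o u = true) ∨ ((v : ℕ) + 1 = (u : ℕ) ∧ o v = false)

/-- The minimum of the dominator chromatic number over all orientations of `P_n`. -/
noncomputable def minDomChromPath (n : ℕ) : ℕ :=
  sInf {m | ∃ o : ℕ → Bool, m = domChrom (pathArc n o)}

open Finset

section Counting

variable {V α : Type*} [Fintype V] (A : V → V → Prop)

open Classical in
noncomputable def dominatedColors [Fintype α] (c : V → α) : Finset α :=
  {a | ∃ v, Dominates A c v a}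

lemma mem_dominatedColors [Fintype α] {c : V → α} {a : α} :
    a ∈ dominatedColors A c ↔ ∃ v, Dominates A c v a := by
  simp [dominatedColors]

variable [DecidableRel A]

def outNbrs (v : V) : Finset V := {w | A v w}

def inNbrs (w : V) : Finset V := {v | A v w}

def nonSinks : Finset V := {v | ∃ w, A v w}

def arcs : Finset (V × V) := {p | A p.1 p.2}

variable {A}

@[simp] lemma mem_outNbrs {v w : V} : w ∈ outNbrs A v ↔ A v w := by simp [outNbrs]

@[simp] lemma mem_inNbrs {v w : V} : v ∈ inNbrs A w ↔ A v w := by simp [inNbrs]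

@[simp] lemma mem_nonSinks {v : V} : v ∈ nonSinks A ↔ ∃ w, A v w := by simp [nonSinks]

@[simp] lemma mem_arcs {p : V × V} : p ∈ arcs A ↔ A p.1 p.2 := by simp [arcs]

lemma card_arcs_eq_sum_card_outNbrs : #(arcs A) = ∑ v ∈ nonSinks A, #(outNbrs A v) := by
  have hsinks : ∀ v ∉ nonSinks A, #(outNbrs A v) = 0 := by
    intro v hv
    simpa [nonSinks, outNbrs, filter_eq_empty_iff] using hv
  rw [sum_subset (subset_univ _) (fun v _ hv => hsinks v hv)]
  simp only [arcs, outNbrs, card_filter, Fintype.sum_prod_type]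

lemma card_arcs_le_two_mul_card_nonSinks (hout : ∀ v, #(outNbrs A v) ≤ 2) :
    #(arcs A) ≤ 2 * #(nonSinks A) := by
  rw [card_arcs_eq_sum_card_outNbrs, mul_comm, ← smul_eq_mul]
  exact sum_le_card_nsmul _ _ _ fun v _ => hout v

variable [Fintype α] {c : V → α}

lemma card_nonSinks_le_two_mul_card_dominatedColors (hc : IsDominatorColoring A c)
    (hin : ∀ w, #(inNbrs A w) ≤ 2) : #(nonSinks A) ≤ 2 * #(dominatedColors A c) := by
  classical
  have hcover : nonSinks A ⊆
      (dominatedColors A c).biUnion fun a => {v | Dominates A c v a} := by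
    intro v hv
    obtain ⟨a, ha⟩ := hc.2 v (mem_nonSinks.1 hv)
    simp only [mem_biUnion, mem_filter, mem_univ, true_and, mem_dominatedColors A]
    exact ⟨a, ⟨v, ha⟩, ha⟩
  have hfiber : ∀ a ∈ dominatedColors A c, #({v | Dominates A c v a} : Finset V) ≤ 2 := by
    intro a ha
    obtain ⟨_, ⟨w, hw⟩, -⟩ := (mem_dominatedColors A).1 ha
    refine (card_le_card fun v hv => ?_).trans (hin w)
    exact mem_inNbrs.2 ((mem_filter.1 hv).2.2 w hw)
  calc #(nonSinks A) ≤ ∑ a ∈ dominatedColors A c, #({v | Dominates A c v a} : Finset V) :=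
        (card_le_card hcover).trans card_biUnion_le
    _ ≤ 2 * #(dominatedColors A c) := by
        rw [mul_comm, ← smul_eq_mul]; exact sum_le_card_nsmul _ _ _ hfiber

lemma card_filter_mem_dominatedColors_le [DecidableEq α] (hout : ∀ v, #(outNbrs A v) ≤ 2) :
    #({v | c v ∈ dominatedColors A c} : Finset V) ≤ 2 * #(dominatedColors A c) := by
  classical
  have hcover : ({v | c v ∈ dominatedColors A c} : Finset V) =
      (dominatedColors A c).biUnion fun a => {v | c v = a} := by
    ext v; simp
  have hclass : ∀ a ∈ dominatedColors A c, #({w | c w = a} : Finset V) ≤ 2 := by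
    intro a ha
    obtain ⟨v, -, hv⟩ := (mem_dominatedColors A).1 ha
    refine (card_le_card fun w hw => ?_).trans (hout v)
    exact mem_outNbrs.2 (hv w (mem_filter.1 hw).2)
  rw [hcover]
  calc _ ≤ ∑ a ∈ dominatedColors A c, #({w | c w = a} : Finset V) := card_biUnion_le
    _ ≤ 2 * #(dominatedColors A c) := by
        rw [mul_comm, ← smul_eq_mul]; exact sum_le_card_nsmul _ _ _ hclass

lemma card_outNbrs_eq_two_of_le_card_arcs (hout : ∀ v, #(outNbrs A v) ≤ 2)
    (harcs : 2 * #(nonSinks A) ≤ #(arcs A)) : ∀ v ∈ nonSinks A, #(outNbrs A v) = 2 := by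
  have hsum : ∑ v ∈ nonSinks A, #(outNbrs A v) = ∑ _v ∈ nonSinks A, 2 := by
    refine le_antisymm (sum_le_sum fun v _ => hout v) ?_
    simpa [← card_arcs_eq_sum_card_outNbrs, mul_comm] using harcs
  exact (sum_eq_sum_iff_of_le fun v _ => hout v).1 hsum

lemma card_arcs_lt_four_mul_card_dominatedColors
    (hdeg : ∀ v, #(inNbrs A v) + #(outNbrs A v) ≤ 2) (hadj : ∀ v, ∃ u, A u v ∨ A v u)
    (hc : IsDominatorColoring A c) (harcs : #(arcs A) < Fintype.card V)
    (hα : #(dominatedColors A c) + 1 = Fintype.card α) :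
    #(arcs A) < 4 * #(dominatedColors A c) := by
  classical
  by_contra! hle
  have hout v : #(outNbrs A v) ≤ 2 := by have := hdeg v; omega
  have hN := card_nonSinks_le_two_mul_card_dominatedColors hc fun w => by
    have := hdeg w; omega
  have hno_in : ∀ v ∈ nonSinks A, ∀ u, ¬ A u v := by
    intro v hv u huv
    have h2 := card_outNbrs_eq_two_of_le_card_arcs hout (by omega) v hv
    have := hdeg v
    have := card_pos.2 ⟨u, mem_inNbrs.2 huv⟩
    omega
  have hnonSinks : ∀ v ∈ nonSinks A, c v ∉ dominatedColors A c := by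
    intro v hv hcv
    obtain ⟨u, -, hu⟩ := (mem_dominatedColors A).1 hcv
    exact hno_in v hv u (hu v rfl)
  obtain ⟨b, hb⟩ : ∃ b, (dominatedColors A c)ᶜ = {b} :=
    card_eq_one.1 (by rw [card_compl]; omega)
  have hb' {a} (ha : a ∉ dominatedColors A c) : a = b := by simpa [hb] using mem_compl.2 ha
  have hB : #(nonSinks A) < #({v | c v ∉ dominatedColors A c} : Finset V) := by
    have := card_filter_mem_dominatedColors_le (c := c) hout
    have := card_filter_add_card_filter_not (s := univ) (fun v => c v ∈ dominatedColors A c)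
    simp only [card_univ] at this
    omega
  obtain ⟨s, hs, hsN⟩ := exists_mem_notMem_of_card_lt_card hB
  obtain ⟨x, hxs | hsx⟩ := hadj s
  · have hx : x ∈ nonSinks A := mem_nonSinks.2 ⟨s, hxs⟩
    exact hc.1 x s hxs (by rw [hb' (hnonSinks x hx), hb' (mem_filter.1 hs).2])
  · exact hsN (mem_nonSinks.2 ⟨x, hsx⟩)

end Counting

section Path

variable {n : ℕ} {o : ℕ → Bool}

instance (n : ℕ) (o : ℕ → Bool) : DecidableRel (pathArc n o) :=
  fun _ _ => inferInstanceAs (Decidable (_ ∨ _))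

lemma pathArc_irrefl (v : Fin n) : ¬ pathArc n o v v := by
  unfold pathArc; omega

lemma card_le_two_of_forall_adjacent (v : Fin n) {s : Finset (Fin n)}
    (hs : ∀ u ∈ s, (u : ℕ) + 1 = v ∨ (v : ℕ) + 1 = u) : #s ≤ 2 := by
  refine (card_le_card_of_injOn (fun u : Fin n => (u : ℕ)) (t := {(v : ℕ) - 1, (v : ℕ) + 1})
    (fun u hu => ?_) Fin.val_injective.injOn).trans card_le_two
  rcases hs u hu with h | h <;> simp <;> omega

lemma card_inNbrs_add_card_outNbrs_pathArc_le (v : Fin n) :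
    #(inNbrs (pathArc n o) v) + #(outNbrs (pathArc n o) v) ≤ 2 := by
  have hdisj : Disjoint (inNbrs (pathArc n o) v) (outNbrs (pathArc n o) v) := by
    simp only [disjoint_left, mem_inNbrs, mem_outNbrs, pathArc]
    intro u hu hv
    rcases hu with ⟨h, ho⟩ | ⟨h, ho⟩ <;> rcases hv with ⟨h', ho'⟩ | ⟨h', ho'⟩ <;>
      first | omega | simp_all
  rw [← card_union_of_disjoint hdisj]
  refine card_le_two_of_forall_adjacent v fun u hu => ?_
  simp only [mem_union, mem_inNbrs, mem_outNbrs, pathArc] at hu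
  omega

lemma pathArc_exists_adjacent (hn : 2 ≤ n) (v : Fin n) :
    ∃ u, pathArc n o u v ∨ pathArc n o v u := by
  unfold pathArc
  by_cases hv : (v : ℕ) + 1 < n
  · exact ⟨⟨v + 1, hv⟩, by cases o v <;> simp⟩
  · refine ⟨⟨v - 1, by omega⟩, ?_⟩
    cases o (v - 1) <;> simp <;> omega

/-- Each arc is determined by the smaller of its two ends, which ranges over `0, …, n - 2`. -/
lemma card_arcs_pathArc : #(arcs (pathArc n o)) = n - 1 := by
  have hinj : Set.InjOn (fun p : Fin n × Fin n => min (p.1 : ℕ) p.2) (arcs (pathArc n o)) := by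
    rintro ⟨u, v⟩ huv ⟨u', v'⟩ huv' h
    simp only [mem_coe, mem_arcs, pathArc] at huv huv' h
    simp only [Prod.mk.injEq, Fin.ext_iff]
    rcases huv with ⟨h1, h2⟩ | ⟨h1, h2⟩ <;> rcases huv' with ⟨h1', h2'⟩ | ⟨h1', h2'⟩
    · omega
    · have : (u : ℕ) = v' := by omega
      simp [this, h2'] at h2
    · have : (v : ℕ) = u' := by omega
      simp [this, h2'] at h2
    · omega
  rw [← card_image_of_injOn hinj, ← card_range (n - 1)]
  congr 1
  ext m
  simp only [mem_image, mem_arcs, mem_range, Prod.exists, pathArc]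
  constructor
  · rintro ⟨u, v, h, rfl⟩
    omega
  · intro hm
    cases ho : o m
    · exact ⟨⟨m + 1, by omega⟩, ⟨m, by omega⟩, Or.inr ⟨rfl, ho⟩, by simp⟩
    · exact ⟨⟨m, by omega⟩, ⟨m + 1, by omega⟩, Or.inl ⟨rfl, ho⟩, by simp⟩

end Path

section DomChrom

variable {V : Type*} {A : V → V → Prop}

lemma isDominatorColoring_of_injective {α : Type*} {c : V → α} (hirr : ∀ v, ¬ A v v)
    (hc : Function.Injective c) : IsDominatorColoring A c := by
  refine ⟨fun u v huv h => hirr u (hc h ▸ huv),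
    fun v ⟨w, hvw⟩ => ⟨c w, ⟨w, rfl⟩, ?_⟩⟩
  intro x hx
  rwa [hc hx]

lemma domChrom_le {t : ℕ} {c : V → Fin t} (hc : IsDominatorColoring A c) : domChrom A ≤ t :=
  Nat.sInf_le ⟨c, hc⟩

lemma le_domChrom [Fintype V] {m : ℕ} (hirr : ∀ v, ¬ A v v)
    (h : ∀ t (c : V → Fin t), IsDominatorColoring A c → m ≤ t) : m ≤ domChrom A :=
  le_csInf ⟨_, _, isDominatorColoring_of_injective hirr (Fintype.equivFin V).injective⟩
    fun t ⟨c, hc⟩ => h t c hc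

end DomChrom

lemma add_two_le_of_isDominatorColoring_pathArc {k t : ℕ} (hk : 1 ≤ k) {o : ℕ → Bool}
    {c : Fin (4 * k + 1) → Fin t} (hc : IsDominatorColoring (pathArc (4 * k + 1) o) c) :
    k + 2 ≤ t := by
  have hdeg := card_inNbrs_add_card_outNbrs_pathArc_le (o := o) (n := 4 * k + 1)
  have hout v : #(outNbrs (pathArc (4 * k + 1) o) v) ≤ 2 := by have := hdeg v; omega
  have harcs : #(arcs (pathArc (4 * k + 1) o)) = 4 * k := card_arcs_pathArc
  have hN := card_nonSinks_le_two_mul_card_dominatedColors hc fun w => by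
    have := hdeg w; omega
  have hNarcs := card_arcs_le_two_mul_card_nonSinks hout
  have hDt : #(dominatedColors (pathArc (4 * k + 1) o) c) ≤ t := by
    simpa using card_le_univ (dominatedColors (pathArc (4 * k + 1) o) c)
  obtain hall | hone | htwo : #(dominatedColors (pathArc (4 * k + 1) o) c) = t ∨
      #(dominatedColors (pathArc (4 * k + 1) o) c) + 1 = t ∨
      #(dominatedColors (pathArc (4 * k + 1) o) c) + 2 ≤ t := by omega
  · have hD : dominatedColors (pathArc (4 * k + 1) o) c = univ :=
      eq_univ_of_card _ (by simpa using hall)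
    have := card_filter_mem_dominatedColors_le (c := c) hout
    simp only [hD, mem_univ, filter_true, card_univ, Fintype.card_fin] at this
    omega
  · have := card_arcs_lt_four_mul_card_dominatedColors hdeg
      (pathArc_exists_adjacent (by omega)) hc (by simp [harcs]) (by simpa using hone)
    omega
  · omega

def zigzag (i : ℕ) : Bool := i % 2 = 1

def zigzagColoring (k : ℕ) (v : Fin (4 * k + 1)) : Fin (k + 2) :=
  ⟨if (v : ℕ) % 2 = 1 then 0 else if (v : ℕ) % 4 = 2 then (v : ℕ) / 4 + 2 else 1,
    by split_ifs <;> omega⟩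

lemma eq_of_zigzagColoring_eq {k : ℕ} {u x : Fin (4 * k + 1)} (hu : (u : ℕ) % 4 = 2)
    (hx : zigzagColoring k x = zigzagColoring k u) : x = u := by
  have := x.isLt
  have := u.isLt
  simp only [zigzagColoring, Fin.ext_iff] at hx ⊢
  split_ifs at hx <;> omega

lemma isDominatorColoring_zigzagColoring (k : ℕ) :
    IsDominatorColoring (pathArc (4 * k + 1) zigzag) (zigzagColoring k) := by
  refine ⟨fun u v huv => ?_, fun v ⟨w, hvw⟩ => ?_⟩
  · simp only [pathArc, zigzag, decide_eq_true_eq, decide_eq_false_iff_not] at huv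
    intro h
    simp only [zigzagColoring, Fin.ext_iff] at h
    split_ifs at h <;> omega
  · have := v.isLt
    simp only [pathArc, zigzag, decide_eq_true_eq, decide_eq_false_iff_not] at hvw
    obtain ⟨u, hu, hvu⟩ :
        ∃ u : Fin (4 * k + 1), (u : ℕ) % 4 = 2 ∧ pathArc (4 * k + 1) zigzag v u := by
      by_cases hv : (v : ℕ) % 4 = 1
      · exact ⟨⟨v + 1, by omega⟩, by simp; omega,
          Or.inl ⟨rfl, by simp [zigzag]; omega⟩⟩
      · exact ⟨⟨v - 1, by omega⟩, by simp; omega,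
          Or.inr ⟨by simp; omega, by simp [zigzag]; omega⟩⟩
    exact ⟨zigzagColoring k u, ⟨u, rfl⟩, fun x hx => eq_of_zigzagColoring_eq hu hx ▸ hvu⟩

theorem min_domChrom_orientations_of_path_four_k_add_one (k : ℕ) (hk : 1 ≤ k) :
    minDomChromPath (4 * k + 1) = k + 2 := by
  have hlower o : k + 2 ≤ domChrom (pathArc (4 * k + 1) o) :=
    le_domChrom pathArc_irrefl fun _ _ hc => add_two_le_of_isDominatorColoring_pathArc hk hc
  have hzigzag : domChrom (pathArc (4 * k + 1) zigzag) = k + 2 :=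
    le_antisymm (domChrom_le (isDominatorColoring_zigzagColoring k)) (hlower zigzag)
  exact le_antisymm (Nat.sInf_le ⟨zigzag, hzigzag.symm⟩)
    (le_csInf ⟨_, zigzag, hzigzag.symm⟩ fun _ ⟨o, ho⟩ => ho ▸ hlower o)
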